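/- arXiv:2510.01756 — 4 statements merged into one kernel-verified Lean document; each statement's English description precedes it below -/
import Mathlib

section
/- With E₀ = √((√5 - 1)/2) and u₀ = (E₀² - 1 + √(1 - E₀²))/E₀, the 3×3 matrix H(u₀) = [[u₀ - i, -1, 0], [-1, 0, -1], [0, -1, u₀ + i]] has a double eigenvalue at E₀, i.e., E₀ is a root of multiplicity at least 2 of its characteristic polynomial. -/
open Polynomial Complex Matrix

lemma charpoly_aux (u : ℂ) :
    (!![u - I, -1, 0; -1, 0, -1; 0, -1, u + I] :
      Matrix (Fin 3) (Fin 3) ℂ).charpoly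
    = X^3 - C (2*u) * X^2 + C (u^2 - 1) * X + C (2*u) := by
  have hI : (C I : ℂ[X])^2 = -1 := by
    rw [← map_pow, I_sq, map_neg, _root_.map_one]
  rw [Matrix.charpoly, Matrix.det_fin_three]
  simp only [charmatrix_apply, Matrix.diagonal]
  simp [_root_.map_mul, map_sub, map_pow, map_ofNat]
  linear_combination (-X : ℂ[X]) * hI

theorem stmt_10 (E₀ u₀ : ℝ)
    (hE : E₀ = Real.sqrt ((Real.sqrt 5 - 1) / 2))
    (hu : u₀ = (E₀ ^ 2 - 1 + Real.sqrt (1 - E₀ ^ 2)) / E₀) :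
    (X - C (E₀ : ℂ)) ^ 2 ∣
      (!![(u₀ : ℂ) - I, -1, 0; -1, 0, -1; 0, -1, (u₀ : ℂ) + I] :
        Matrix (Fin 3) (Fin 3) ℂ).charpoly := by
  have h5 : Real.sqrt 5 ^ 2 = 5 := Real.sq_sqrt (by norm_num)
  have h5' : (1:ℝ) ≤ Real.sqrt 5 := by nlinarith [Real.sqrt_nonneg 5]
  have hE2 : E₀ ^ 2 = (Real.sqrt 5 - 1) / 2 := by
    rw [hE, Real.sq_sqrt (by linarith)]
  have hE4 : E₀ ^ 4 + E₀ ^ 2 = 1 := by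
    have h : E₀ ^ 4 = (E₀ ^ 2) ^ 2 := by ring
    rw [h, hE2]; nlinarith
  have hEpos : 0 < E₀ := by
    rw [hE]; exact Real.sqrt_pos.mpr (by nlinarith [Real.sqrt_nonneg 5])
  have hsq : Real.sqrt (1 - E₀ ^ 2) = E₀ ^ 2 := by
    have h : 1 - E₀ ^ 2 = (E₀ ^ 2) ^ 2 := by nlinarith
    rw [h, Real.sqrt_sq (by positivity)]
  have huE : u₀ * E₀ = 2 * E₀ ^ 2 - 1 := by
    rw [hu, hsq]; field_simp; ring
  -- complex versions
  set e : ℂ := (E₀ : ℂ) with he_def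
  set u : ℂ := (u₀ : ℂ) with hu_def
  have he0 : e ≠ 0 := by
    simp only [he_def, ne_eq, Complex.ofReal_eq_zero]; exact hEpos.ne'
  have hue : u * e = 2 * e ^ 2 - 1 := by
    rw [he_def, hu_def]; exact_mod_cast congrArg (fun x : ℝ => (x : ℂ)) huE
  have he4 : e ^ 4 + e ^ 2 = 1 := by
    rw [he_def]; exact_mod_cast congrArg (fun x : ℝ => (x : ℂ)) hE4
  -- key coefficient identities
  have h1 : u ^ 2 - 1 = 4 * e * u - 3 * e ^ 2 := by
    apply mul_left_cancel₀ (pow_ne_zero 2 he0)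
    linear_combination (u * e + 2 * e ^ 2 - 1 - 4 * e ^ 2) * hue - he4
  have h2 : 2 * u = -(e ^ 2 * (2 * u - 2 * e)) := by
    apply mul_left_cancel₀ he0
    linear_combination (2 + 2 * e ^ 2) * hue + 2 * he4
  rw [charpoly_aux]
  refine ⟨X - C (2 * u - 2 * e), ?_⟩
  have c1 := congrArg C h1
  have c2 := congrArg C h2
  simp only [map_sub, map_add, _root_.map_mul, map_pow, _root_.map_one, map_ofNat,
    map_neg] at c1 c2 ⊢
  linear_combination (X : ℂ[X]) * c1 + c2
end

section
/- The 3×3 matrix H(u₀) at the exceptional point (where u₀ = (E₀² - 1 + √(1-E₀²))/E₀ and E₀ = √((√5-1)/2)) is not diagonalizable. -/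
open Complex Matrix

-- auxiliary algebra lemma: the power-sum constraints force each diagonal
-- entry to be a root of (t - c)²(t - (2u - 2c)).
lemma keylem_stmt11 (u c d0 d1 d2 : ℂ) (hc0 : c ≠ 0) (hc : c^4 + c^2 = 1)
    (huc : u*c = 2*c^2 - 1)
    (h1 : d0+d1+d2 = 2*u) (h2 : d0^2+d1^2+d2^2 = 2*u^2+2)
    (h3 : d0^3+d1^3+d2^3 = 2*u^3) :
    (d0 - c)*(d0 - (2*u - 2*c)) = 0 := by
  have hs2 : d0*d1 + d0*d2 + d1*d2 = u^2 - 1 := by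
    linear_combination ((d0+d1+d2+2*u)/2) * h1 - (1/2) * h2
  have hs3 : d0*d1*d2 = -(2*u) := by
    linear_combination (((d0+d1+d2)^2 + 2*u*(d0+d1+d2) + 4*u^2 - 3*(d0^2+d1^2+d2^2))/6) * h1
      - u * h2 + (1/3) * h3
  have hcube : d0^3 - 2*u*d0^2 + (u^2-1)*d0 + 2*u = 0 := by
    linear_combination d0^2 * h1 - d0 * hs2 + hs3
  have T2 : c^2 * ((d0-c)^2*(d0-(2*u-2*c))) = 0 := by
    linear_combination c^2 * hcube + (d0 - 2*c) * hc
      + (d0*(-(c*u)+2*c^2+1) - 2*c^3 - 2*c) * huc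
  have T3 : (d0-c)^2*(d0-(2*u-2*c)) = 0 := by
    rcases mul_eq_zero.mp T2 with h | h
    · exact absurd h (pow_ne_zero _ hc0)
    · exact h
  rcases mul_eq_zero.mp T3 with h | h
  · rw [sq_eq_zero_iff.mp h]; ring
  · rw [mul_eq_zero]; right; exact h

set_option maxHeartbeats 1000000 in
theorem stmt_11 (E₀ u₀ : ℝ)
    (hE : E₀ = Real.sqrt ((Real.sqrt 5 - 1) / 2))
    (hu : u₀ = (E₀ ^ 2 - 1 + Real.sqrt (1 - E₀ ^ 2)) / E₀)
    (H : Matrix (Fin 3) (Fin 3) ℂ)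
    (hH : H = !![(u₀ : ℂ) - I, -1, 0; -1, 0, -1; 0, -1, (u₀ : ℂ) + I]) :
    ¬ ∃ P : Matrix (Fin 3) (Fin 3) ℂ, IsUnit P.det ∧ (P⁻¹ * H * P).IsDiag := by
  -- real facts
  have h5 : Real.sqrt 5 ^ 2 = 5 := Real.sq_sqrt (by norm_num)
  have h5' : 1 ≤ Real.sqrt 5 := by nlinarith [Real.sqrt_nonneg 5]
  have hE2 : E₀ ^ 2 = (Real.sqrt 5 - 1) / 2 := by
    rw [hE]; exact Real.sq_sqrt (by linarith)
  have hE4 : E₀ ^ 4 + E₀ ^ 2 = 1 := by nlinarith [hE2, h5]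
  have hEpos : 0 < E₀ := by rw [hE]; exact Real.sqrt_pos.mpr (by nlinarith)
  have hsq : Real.sqrt (1 - E₀ ^ 2) = E₀ ^ 2 := by
    rw [show 1 - E₀ ^ 2 = (E₀ ^ 2) ^ 2 by nlinarith]
    exact Real.sqrt_sq (sq_nonneg _)
  have huE : u₀ * E₀ = 2 * E₀ ^ 2 - 1 := by
    rw [hu, hsq]; field_simp; ring
  -- complex facts
  have hc0 : (E₀ : ℂ) ≠ 0 := by exact_mod_cast hEpos.ne'
  have hcc : (E₀ : ℂ) ^ 4 + (E₀ : ℂ) ^ 2 = 1 := by exact_mod_cast hE4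
  have hucc : (u₀ : ℂ) * (E₀ : ℂ) = 2 * (E₀ : ℂ) ^ 2 - 1 := by exact_mod_cast huE
  rintro ⟨P, hP, hdiag⟩
  have hPP : P * P⁻¹ = 1 := mul_nonsing_inv P hP
  have hPP' : P⁻¹ * P = 1 := nonsing_inv_mul P hP
  obtain ⟨A, hA⟩ : ∃ A, A = P⁻¹ * H * P := ⟨_, rfl⟩
  rw [← hA] at hdiag
  -- trace identities
  have hA2 : A * A = P⁻¹ * (H * H) * P := by
    rw [hA]
    calc P⁻¹ * H * P * (P⁻¹ * H * P) = P⁻¹ * H * (P * P⁻¹) * H * P := by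
          simp only [Matrix.mul_assoc]
      _ = P⁻¹ * (H * H) * P := by rw [hPP]; simp only [Matrix.mul_assoc, Matrix.mul_one]
  have hA3 : A * A * A = P⁻¹ * (H * H * H) * P := by
    rw [hA2, hA]
    calc P⁻¹ * (H * H) * P * (P⁻¹ * H * P) = P⁻¹ * (H * H) * (P * P⁻¹) * H * P := by
          simp only [Matrix.mul_assoc]
      _ = P⁻¹ * (H * H * H) * P := by rw [hPP]; simp only [Matrix.mul_assoc, Matrix.mul_one]
  have t1 : trace A = trace H := by
    rw [hA, Matrix.trace_mul_cycle, hPP, Matrix.one_mul]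
  have t2 : trace (A * A) = trace (H * H) := by
    rw [hA2, Matrix.trace_mul_cycle, hPP, Matrix.one_mul]
  have t3 : trace (A * A * A) = trace (H * H * H) := by
    rw [hA3, Matrix.trace_mul_cycle, hPP, Matrix.one_mul]
  -- off-diagonal zeros
  have z01 : A 0 1 = 0 := hdiag (by decide)
  have z02 : A 0 2 = 0 := hdiag (by decide)
  have z10 : A 1 0 = 0 := hdiag (by decide)
  have z12 : A 1 2 = 0 := hdiag (by decide)
  have z20 : A 2 0 = 0 := hdiag (by decide)
  have z21 : A 2 1 = 0 := hdiag (by decide)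
  -- concrete trace equations
  rw [trace_fin_three, trace_fin_three, hH] at t1
  simp at t1
  rw [trace_fin_three, trace_fin_three, hH, Matrix.mul_fin_three] at t2
  simp [Matrix.mul_apply, Fin.sum_univ_three, z01, z02, z10, z12, z20, z21] at t2
  rw [trace_fin_three, trace_fin_three, hH, Matrix.mul_fin_three, Matrix.mul_fin_three] at t3
  simp [Matrix.mul_apply, Fin.sum_univ_three, z01, z02, z10, z12, z20, z21] at t3
  have h1 : A 0 0 + A 1 1 + A 2 2 = 2*(u₀:ℂ) := by linear_combination t1
  have h2 : (A 0 0)^2 + (A 1 1)^2 + (A 2 2)^2 = 2*(u₀:ℂ)^2+2 := by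
    linear_combination t2 + 2*Complex.I_sq
  have h3 : (A 0 0)^3 + (A 1 1)^3 + (A 2 2)^3 = 2*(u₀:ℂ)^3 := by
    linear_combination t3 + 6*(u₀:ℂ)*Complex.I_sq
  -- each diagonal entry is a root of (t-c)(t-μ)
  have q0 := keylem_stmt11 (u₀:ℂ) (E₀:ℂ) (A 0 0) (A 1 1) (A 2 2) hc0 hcc hucc
    h1 h2 h3
  have q1 := keylem_stmt11 (u₀:ℂ) (E₀:ℂ) (A 1 1) (A 0 0) (A 2 2) hc0 hcc hucc
    (by linear_combination h1) (by linear_combination h2) (by linear_combination h3)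
  have q2 := keylem_stmt11 (u₀:ℂ) (E₀:ℂ) (A 2 2) (A 0 0) (A 1 1) hc0 hcc hucc
    (by linear_combination h1) (by linear_combination h2) (by linear_combination h3)
  set c : ℂ := (E₀:ℂ) with hc
  set μ : ℂ := 2*(u₀:ℂ) - 2*(E₀:ℂ) with hμ
  have hZ : (A - c • 1) * (A - μ • 1) = 0 := by
    ext i j
    fin_cases i <;> fin_cases j <;>
      simp [Matrix.mul_apply, Fin.sum_univ_three, Matrix.one_apply,
        z01, z02, z10, z12, z20, z21] <;>
      first
      | exact mul_eq_zero.mp q0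
      | exact mul_eq_zero.mp q1
      | exact mul_eq_zero.mp q2
  -- conjugate back
  have e1 : P⁻¹ * (H - c • 1) * P = A - c • 1 := by
    rw [Matrix.mul_sub, Matrix.sub_mul, hA, Matrix.mul_smul, Matrix.smul_mul,
      Matrix.mul_one, hPP']
  have e2 : P⁻¹ * (H - μ • 1) * P = A - μ • 1 := by
    rw [Matrix.mul_sub, Matrix.sub_mul, hA, Matrix.mul_smul, Matrix.smul_mul,
      Matrix.mul_one, hPP']
  have e3 : P⁻¹ * ((H - c • 1) * (H - μ • 1)) * P = 0 := by
    calc P⁻¹ * ((H - c • 1) * (H - μ • 1)) * P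
        = (P⁻¹ * (H - c • 1) * P) * (P⁻¹ * (H - μ • 1) * P) := by
          simp only [Matrix.mul_assoc]
          rw [show P * (P⁻¹ * ((H - μ • 1) * P)) = (P * P⁻¹) * ((H - μ • 1) * P) by
            simp only [Matrix.mul_assoc], hPP, Matrix.one_mul]
      _ = 0 := by rw [e1, e2, hZ]
  have e4 : (H - c • 1) * (H - μ • 1) = 0 := by
    have h := congrArg (fun M => P * M * P⁻¹) e3
    simp only [Matrix.mul_zero, Matrix.zero_mul] at h
    calc (H - c • 1) * (H - μ • 1)
        = P * P⁻¹ * ((H - c • 1) * (H - μ • 1)) * (P * P⁻¹) := by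
          rw [hPP]; simp
      _ = P * (P⁻¹ * ((H - c • 1) * (H - μ • 1)) * P) * P⁻¹ := by
          simp only [Matrix.mul_assoc]
      _ = 0 := h
  -- evaluate entry (0,1) to get a contradiction
  have e5 := congrFun (congrFun e4 0) 1
  simp [hH, Matrix.mul_apply, Fin.sum_univ_three, Matrix.one_apply, hc, hμ] at e5
  have him := congrArg Complex.im e5
  simp at him
end

section
/- The 4×4 matrix H(0) = [[-i, -1, 0, 0], [-1, 0, -1, 0], [0, -1, 0, -1], [0, 0, -1, i]] is not diagonalizable: the kernel of H(0) is one-dimensional while 0 is a double root of the characteristic polynomial. -/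
/-!
For a diagonalizable matrix `A = P D P⁻¹`, both the dimension of the kernel of `A` and the
multiplicity of `0` as a root of its characteristic polynomial count the zero diagonal entries
of `D`. For `H(0)` the kernel is spanned by `(1, -i, -1, i)`, while the characteristic
polynomial is `X² (X² - 2)`, so the two numbers are `1 ≠ 2`.
-/

open Polynomial Complex Matrix

namespace Matrix

variable {m n : Type*} [Fintype n] [DecidableEq n] {K : Type*} [Field K]

theorem finrank_ker_toLin'_add_rank (A : Matrix m n K) :
    Module.finrank K (LinearMap.ker (toLin' A)) + A.rank = Fintype.card n := by
  rw [add_comm, ← Module.finrank_fintype_fun_eq_card K,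
    ← (toLin' A).finrank_range_add_finrank_ker]
  rfl

theorem charpoly_conj_of_isUnit_det {R : Type*} [CommRing R] (A P : Matrix n n R)
    (hP : IsUnit P.det) : (P⁻¹ * A * P).charpoly = A.charpoly := by
  rw [charpoly_mul_comm, ← Matrix.mul_assoc, mul_nonsing_inv P hP, Matrix.one_mul]

theorem rootMultiplicity_zero_charpoly_diagonal [DecidableEq K] (d : n → K) :
    (diagonal d).charpoly.rootMultiplicity 0 = Fintype.card {i // d i = 0} := by
  have hroots : (diagonal d).charpoly.roots = Finset.univ.val.map d := by
    rw [charpoly_diagonal, ← roots_multiset_prod_X_sub_C (Finset.univ.val.map d),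
      Multiset.map_map, Finset.prod_eq_multiset_prod]
    rfl
  rw [← count_roots, hroots, Multiset.count_map, Fintype.card_subtype]
  simp [Finset.card, eq_comm]

theorem finrank_ker_toLin'_eq_rootMultiplicity_zero_charpoly_of_isDiag_conj
    (A P : Matrix n n K) (hP : IsUnit P.det) (hD : (P⁻¹ * A * P).IsDiag) :
    Module.finrank K (LinearMap.ker (toLin' A)) = A.charpoly.rootMultiplicity 0 := by
  classical
  set d := (P⁻¹ * A * P).diag
  have hdiag : diagonal d = P⁻¹ * A * P := hD.diagonal_diag
  have hrank : A.rank = Fintype.card {i // d i ≠ 0} := by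
    rw [← rank_diagonal, hdiag, rank_mul_eq_left_of_isUnit_det P _ hP,
      rank_mul_eq_right_of_isUnit_det _ _ (isUnit_nonsing_inv_det P hP)]
  rw [← charpoly_conj_of_isUnit_det A P hP, ← hdiag, rootMultiplicity_zero_charpoly_diagonal]
  have hsum := finrank_ker_toLin'_add_rank A
  rw [hrank, Fintype.card_subtype_compl] at hsum
  have := Fintype.card_subtype_le (fun i => d i = 0)
  omega

end Matrix

def H₀ : Matrix (Fin 4) (Fin 4) ℂ := !![-I, -1, 0, 0; -1, 0, -1, 0; 0, -1, 0, -1; 0, 0, -1, I]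

theorem H₀_mulVec (x : Fin 4 → ℂ) :
    H₀ *ᵥ x = ![-I * x 0 - x 1, -x 0 - x 2, -x 1 - x 3, -x 2 + I * x 3] := by
  ext i
  fin_cases i <;> simp [H₀, mulVec, dotProduct, Fin.sum_univ_four] <;> ring

theorem H₀_mulVec_eq_zero : H₀ *ᵥ ![1, -I, -1, I] = 0 := by
  rw [H₀_mulVec]
  ext i
  fin_cases i <;> simp

theorem ker_toLin'_H₀ : LinearMap.ker (toLin' H₀) = Submodule.span ℂ {![1, -I, -1, I]} := by
  ext x
  rw [LinearMap.mem_ker, toLin'_apply, Submodule.mem_span_singleton]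
  constructor
  · intro hx
    rw [H₀_mulVec] at hx
    have e0 : -I * x 0 - x 1 = 0 := congrFun hx 0
    have e1 : -x 0 - x 2 = 0 := congrFun hx 1
    have e2 : -x 1 - x 3 = 0 := congrFun hx 2
    have h1 : x 1 = -I * x 0 := by linear_combination -e0
    have h2 : x 2 = -x 0 := by linear_combination -e1
    have h3 : x 3 = I * x 0 := by linear_combination e0 - e2
    refine ⟨x 0, ?_⟩
    ext i
    fin_cases i <;> simp [h1, h2, h3, mul_comm]
  · rintro ⟨a, rfl⟩
    rw [mulVec_smul, H₀_mulVec_eq_zero, smul_zero]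

theorem finrank_ker_toLin'_H₀ : Module.finrank ℂ (LinearMap.ker (toLin' H₀)) = 1 := by
  rw [ker_toLin'_H₀, finrank_span_singleton]
  intro h
  simpa using congrFun h 0

theorem charpoly_H₀ : H₀.charpoly = X ^ 2 * (X ^ 2 - 2) := by
  have hc : charmatrix H₀ = !![X + C I, 1, 0, 0; 1, X, 1, 0; 0, 1, X, 1; 0, 0, 1, X - C I] := by
    ext i j
    fin_cases i <;> fin_cases j <;> simp [H₀]
  have hI : (C I : ℂ[X]) ^ 2 = -1 := by rw [← map_pow, I_sq, map_neg, map_one]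
  rw [charpoly, hc, det_succ_row_zero]
  simp [Fin.sum_univ_succ, det_fin_three, Fin.succAbove]
  linear_combination (1 - X ^ 2) * hI

theorem rootMultiplicity_zero_charpoly_H₀ : H₀.charpoly.rootMultiplicity 0 = 2 := by
  have hq : ¬ (X ^ 2 - 2 : ℂ[X]).IsRoot 0 := by simp
  have hX : rootMultiplicity 0 (X ^ 2 : ℂ[X]) = 2 := by
    simpa using rootMultiplicity_X_sub_C_pow (0 : ℂ) 2
  rw [charpoly_H₀, rootMultiplicity_mul (mul_ne_zero (pow_ne_zero 2 X_ne_zero)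
    fun h => hq (by simp [h])), hX, rootMultiplicity_eq_zero hq]

theorem stmt_14
    (H : Matrix (Fin 4) (Fin 4) ℂ)
    (hH : H = !![-I, -1, 0, 0; -1, 0, -1, 0; 0, -1, 0, -1; 0, 0, -1, I]) :
    Module.finrank ℂ (LinearMap.ker (Matrix.toLin' H)) = 1 ∧
    H.charpoly.rootMultiplicity 0 = 2 ∧
    ¬ ∃ P : Matrix (Fin 4) (Fin 4) ℂ, IsUnit P.det ∧ (P⁻¹ * H * P).IsDiag := by
  obtain rfl : H = H₀ := hH
  refine ⟨finrank_ker_toLin'_H₀, rootMultiplicity_zero_charpoly_H₀, ?_⟩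
  rintro ⟨P, hP, hD⟩
  have := finrank_ker_toLin'_eq_rootMultiplicity_zero_charpoly_of_isDiag_conj H₀ P hP hD
  rw [finrank_ker_toLin'_H₀, rootMultiplicity_zero_charpoly_H₀] at this
  omega
end

section
/- If E ∈ ℝ satisfies E² ≤ 2 and E² ≠ 1, then u = E + E·(√(2 - E²) - 1)/(E² - 1) is a real root (in u) of the quartic characteristic polynomial E⁴ - 2u·E³ + (u² - 2)·E² + 4u·E - u², so that E is an eigenvalue of the 4×4 matrix H(u). -/
/-! Viewed as a quadratic in `u`, the quartic is `(E² - 1) u² - 2E(E² - 2) u + E²(E² - 2)`,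
whose discriminant is `4E²(2 - E²)`; the given `u` is one of its two roots. The quartic is also the
characteristic polynomial of `H(u)` evaluated at `E`, so `E` lies in the spectrum of `H(u)`. -/

open Complex Matrix

-- The continuant of the tridiagonal matrix `x - H`.
theorem eval_charpoly_tridiagonal {R : Type*} [CommRing R] (a b x : R) :
    (!![a, -1, 0, 0; -1, 0, -1, 0; 0, -1, 0, -1; 0, 0, -1, b] : Matrix (Fin 4) (Fin 4) R).charpoly.eval x
      = (x - a) * (x - b) * x ^ 2 - (x - a) * x - (x - a) * (x - b) - x * (x - b) + 1 := by
  rw [eval_charpoly]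
  simp [det_succ_row_zero, Fin.sum_univ_succ, Fin.succAbove]
  ring

theorem eval_charpoly_H (u x : ℂ) :
    (!![u - I, -1, 0, 0; -1, 0, -1, 0; 0, -1, 0, -1; 0, 0, -1, u + I] :
      Matrix (Fin 4) (Fin 4) ℂ).charpoly.eval x
      = x ^ 4 - 2 * u * x ^ 3 + (u ^ 2 - 2) * x ^ 2 + 4 * u * x - u ^ 2 := by
  rw [eval_charpoly_tridiagonal]
  linear_combination (1 - x ^ 2) * I_sq

theorem quartic_eq_zero_of_eq_root {E u : ℝ} (hE2 : E ^ 2 ≤ 2) (hE1 : E ^ 2 ≠ 1)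
    (hu : u = E + E * (Real.sqrt (2 - E ^ 2) - 1) / (E ^ 2 - 1)) :
    E ^ 4 - 2 * u * E ^ 3 + (u ^ 2 - 2) * E ^ 2 + 4 * u * E - u ^ 2 = 0 := by
  have hden : E ^ 2 - 1 ≠ 0 := sub_ne_zero.mpr hE1
  have hsqrt : Real.sqrt (2 - E ^ 2) ^ 2 = 2 - E ^ 2 := Real.sq_sqrt (by linarith)
  subst hu
  field_simp
  linear_combination (E ^ 4 - E ^ 2) * hsqrt

theorem stmt_15 (E : ℝ) (hE2 : E ^ 2 ≤ 2) (hE1 : E ^ 2 ≠ 1)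
    (u : ℝ) (hu : u = E + E * (Real.sqrt (2 - E ^ 2) - 1) / (E ^ 2 - 1)) :
    E ^ 4 - 2 * u * E ^ 3 + (u ^ 2 - 2) * E ^ 2 + 4 * u * E - u ^ 2 = 0 ∧
    (E : ℂ) ∈ spectrum ℂ
      (!![(u : ℂ) - I, -1, 0, 0; -1, 0, -1, 0; 0, -1, 0, -1; 0, 0, -1, (u : ℂ) + I] :
        Matrix (Fin 4) (Fin 4) ℂ) := by
  have hquartic := quartic_eq_zero_of_eq_root hE2 hE1 hu
  refine ⟨hquartic, mem_spectrum_iff_isRoot_charpoly.mpr ?_⟩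
  rw [Polynomial.IsRoot, eval_charpoly_H]
  exact_mod_cast hquartic
end
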